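/- Let N be a trie over an alphabet α: a finite set of finite lists over α that is closed under taking prefixes and contains the empty list (the root). For a node p ∈ N, the children of p are the nodes q ∈ N with q ≠ [] whose list with its last element removed equals p. Then for every node c ∈ N, the parsing search steps for c — the sum, over all prefixes p of c, of the number of children of p in N — is at most |N| − 1 (the number of non-root nodes of the trie). In particular, identifying a chunk by traversing the tree-structured memory takes no more search steps than the total number of stored chunks. -/

import Mathlib

open Function

section TrieChildren

variable {α : Type*} [DecidableEq α]

def trieChildren (N : Finset (List α)) (p : List α) : Finset (List α) :=
  N.filter fun q => q ≠ [] ∧ q.dropLast = p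

theorem pairwise_disjoint_trieChildren (N : Finset (List α)) :
    Pairwise (Disjoint on trieChildren N) := by
  intro p q hpq
  simp only [onFun, trieChildren, Finset.disjoint_left, Finset.mem_filter]
  rintro r ⟨-, -, rfl⟩ ⟨-, -, h⟩
  exact hpq h

theorem trieChildren_subset_erase_nil (N : Finset (List α)) (p : List α) :
    trieChildren N p ⊆ N.erase [] := fun r hr => by
  obtain ⟨hrN, hne, -⟩ := Finset.mem_filter.mp hr
  exact Finset.mem_erase.mpr ⟨hne, hrN⟩

theorem sum_card_trieChildren_le (N S : Finset (List α)) :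
    ∑ p ∈ S, (trieChildren N p).card ≤ (N.erase []).card := by
  rw [← Finset.card_biUnion fun p _ q _ hpq => pairwise_disjoint_trieChildren N hpq]
  exact Finset.card_le_card <|
    Finset.biUnion_subset.mpr fun p _ => trieChildren_subset_erase_nil N p

end TrieChildren

theorem parsing_search_steps_le_card_sub_one_general
    {α : Type*} [DecidableEq α] (N : Finset (List α))
    (hroot : ([] : List α) ∈ N)
    (c : List α) :
    ∑ p ∈ c.inits.toFinset,
        (N.filter (fun q => q ≠ [] ∧ q.dropLast = p)).card ≤ N.card - 1 :=
  (sum_card_trieChildren_le N c.inits.toFinset).trans_eq (Finset.card_erase_of_mem hroot)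

/-- In a trie (a finite, prefix-closed set of lists containing the root `[]`),
the parsing search steps for a node `c` — the sum over all prefixes `p` of `c`
of the number of children of `p` — is at most the number of non-root nodes. -/
theorem parsing_search_steps_le_card_sub_one
    {α : Type*} [DecidableEq α] (N : Finset (List α))
    (hroot : ([] : List α) ∈ N)
    (hclosed : ∀ p ∈ N, ∀ q : List α, q <+: p → q ∈ N)
    (c : List α) (hc : c ∈ N) :
    ∑ p ∈ c.inits.toFinset,
        (N.filter (fun q => q ≠ [] ∧ q.dropLast = p)).card ≤ N.card - 1 :=
  parsing_search_steps_le_card_sub_one_general N hroot c
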